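/- arXiv:1709.06189 — 2 statements merged into one kernel-verified Lean document; each statement's English description precedes it below -/
import Mathlib

section
/- Let p be a prime, k ≥ 1, and let P ∈ 𝔽_p[t_1,…,t_k] be a product of N affine-linear polynomials (degree ≤ 1 polynomials) with N < (k+1)(p-1). Then ∑_{t ∈ 𝔽_p^k} P(t) = (-1)^k · c, where c is the coefficient of t_1^{p-1} ⋯ t_k^{p-1} in P. -/
/-!
Expanding a polynomial `f` over `𝔽_q` into monomials, the sum of `t ^ d` over `t ∈ 𝔽_q^σ` factors
as `∏ i, ∑ x, x ^ d i`, and `∑ x, x ^ n` is `-1` when `n` is a positive multiple of `q - 1` and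
`0` otherwise. A monomial all of whose exponents are positive multiples of `q - 1` has degree at
least `(|σ| + 1)(q - 1)` unless every exponent equals `q - 1`, so under the degree bound only the
coefficient of `∏ i, t i ^ (q - 1)` survives.
-/

open Finset MvPolynomial

namespace FiniteField

variable {K : Type*} [Field K] [Fintype K]

theorem sum_pow_eq_sum_units_pow [DecidableEq K] {n : ℕ} (hn : n ≠ 0) :
    ∑ x : K, x ^ n = ∑ x : Kˣ, (x : K) ^ n := by
  rw [Fintype.sum_equiv unitsEquivNeZero (fun x : Kˣ => (x : K) ^ n) (fun a => (a : K) ^ n)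
      (fun _ => rfl), ← Finset.sum_subtype (univ.erase 0) (fun _ => by simp) (· ^ n),
    ← Finset.add_sum_erase _ _ (mem_univ 0), zero_pow hn, zero_add]

theorem sum_pow (n : ℕ) :
    ∑ x : K, x ^ n = if n ≠ 0 ∧ Fintype.card K - 1 ∣ n then -1 else 0 := by
  classical
  rcases eq_or_ne n 0 with rfl | hn
  · simp
  · rw [sum_pow_eq_sum_units_pow hn, sum_pow_units]
    simp [hn]

end FiniteField

theorem Fintype.eq_of_forall_dvd_of_sum_lt {σ : Type*} [Fintype σ] {d : σ → ℕ} {m : ℕ}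
    (hd : ∀ i, d i ≠ 0 ∧ m ∣ d i) (hsum : ∑ i, d i < (Fintype.card σ + 1) * m) (i : σ) :
    d i = m := by
  have hge : ∀ j, m ≤ d j := fun j => Nat.le_of_dvd (Nat.pos_of_ne_zero (hd j).1) (hd j).2
  by_contra hne
  have hi : 2 * m ≤ d i := by
    obtain ⟨c, hc⟩ := (hd i).2
    rcases c with _ | _ | c
    · exact absurd hc (hd i).1
    · omega
    · rw [hc, mul_comm 2]
      exact Nat.mul_le_mul_left m (by omega)
  have hsplit : ∑ j, d j = Fintype.card σ * m + ∑ j, (d j - m) := by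
    rw [← smul_eq_mul, ← Finset.card_univ, ← Finset.sum_const, ← Finset.sum_add_distrib]
    exact Finset.sum_congr rfl fun j _ => (Nat.add_sub_cancel' (hge j)).symm
  have hexcess := Finset.single_le_sum (fun j _ => Nat.zero_le (d j - m)) (mem_univ i)
  rw [add_one_mul] at hsum
  omega

namespace MvPolynomial

theorem sum_eval_eq_sum_coeff_mul {R σ : Type*} [CommSemiring R] [Fintype R] [Fintype σ]
    [DecidableEq σ] (f : MvPolynomial σ R) :
    ∑ t : σ → R, eval t f = ∑ d ∈ f.support, f.coeff d * ∏ i, ∑ x : R, x ^ d i := by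
  simp_rw [eval_eq']
  rw [sum_comm]
  refine sum_congr rfl fun d _ => ?_
  rw [← mul_sum, Fintype.prod_sum]

theorem sum_eval_eq_neg_one_pow_mul_coeff {K σ : Type*} [Field K] [Fintype K] [Fintype σ]
    [DecidableEq σ] (f : MvPolynomial σ K)
    (h : f.totalDegree < (Fintype.card σ + 1) * (Fintype.card K - 1)) :
    ∑ t : σ → K, eval t f = (-1) ^ Fintype.card σ *
      f.coeff (Finsupp.equivFunOnFinite.symm fun _ => Fintype.card K - 1) := by
  set top : σ →₀ ℕ := Finsupp.equivFunOnFinite.symm fun _ => Fintype.card K - 1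
  have hterm : ∀ d ∈ f.support, d ≠ top → ∏ i, ∑ x : K, x ^ d i = 0 := by
    intro d hd hne
    simp_rw [FiniteField.sum_pow, Fintype.prod_ite_zero]
    refine if_neg fun hdvd => hne (Finsupp.ext fun i => ?_)
    have hdeg : ∑ i, d i ≤ f.totalDegree := by
      simpa [Finsupp.sum_fintype] using le_totalDegree hd
    exact Fintype.eq_of_forall_dvd_of_sum_lt hdvd (hdeg.trans_lt h) i
  have htop : ∏ i, ∑ x : K, x ^ top i = (-1) ^ Fintype.card σ := by
    simp [top, FiniteField.sum_pow, Nat.sub_ne_zero_of_lt Fintype.one_lt_card]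
  rw [sum_eval_eq_sum_coeff_mul, sum_eq_single top
    (fun d hd hne => by rw [hterm d hd hne, mul_zero])
    (fun hnot => by rw [notMem_support_iff.mp hnot, zero_mul]), htop, mul_comm]

end MvPolynomial

theorem sum_eval_prod_linear_general (p k N : ℕ) [Fact p.Prime]
    (hN : N < (k + 1) * (p - 1))
    (L : Fin N → MvPolynomial (Fin k) (ZMod p))
    (hL : ∀ j, (L j).totalDegree ≤ 1) :
    ∑ t : Fin k → ZMod p, MvPolynomial.eval t (∏ j, L j) =
      (-1 : ZMod p) ^ k *
        MvPolynomial.coeff (Finsupp.equivFunOnFinite.symm fun _ : Fin k => p - 1)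
          (∏ j, L j) := by
  have hdeg : (∏ j, L j).totalDegree ≤ N :=
    calc (∏ j, L j).totalDegree ≤ ∑ j, (L j).totalDegree := totalDegree_finsetProd _ _
      _ ≤ ∑ _j : Fin N, 1 := sum_le_sum fun j _ => hL j
      _ = N := by simp
  simpa [ZMod.card] using
    sum_eval_eq_neg_one_pow_mul_coeff (∏ j, L j) (by simpa [ZMod.card] using hdeg.trans_lt hN)

theorem sum_eval_prod_linear (p k N : ℕ) [Fact p.Prime] (hk : 1 ≤ k)
    (hN : N < (k + 1) * (p - 1))
    (L : Fin N → MvPolynomial (Fin k) (ZMod p))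
    (hL : ∀ j, (L j).totalDegree ≤ 1) :
    ∑ t : Fin k → ZMod p, MvPolynomial.eval t (∏ j, L j) =
      (-1 : ZMod p) ^ k *
        MvPolynomial.coeff (Finsupp.equivFunOnFinite.symm fun _ : Fin k => p - 1)
          (∏ j, L j) :=
  sum_eval_prod_linear_general p k N hN L hL
end

section
/- Let p > 3 be a prime, and let x_1, x_2, x_3 ∈ 𝔽_p, not necessarily distinct. Let Γ ⊂ 𝔽_p^2 be the affine curve y^2 = (t+x_1)(t+x_2)(t+x_3). For j ∈ {1,2,3}, let I_j ∈ 𝔽_p be the coefficient of t^{p-1} in (t+x_j)^{(p-1)/2 - 1} ∏_{s≠j}(t+x_s)^{(p-1)/2}. Then ∑_{(t,y) ∈ Γ, t ≠ -x_j} 1/(t+x_j) = - I_j. -/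
open Polynomial Finset in
private lemma sum_pow_zmod (p : ℕ) [Fact p.Prime] (i : ℕ) (hi : i ≠ 0) :
    ∑ x : ZMod p, x ^ i = if (p - 1) ∣ i then -1 else 0 := by
  classical
  have h1 : ∑ x : ZMod p, x ^ i = ∑ x : (ZMod p)ˣ, ((x : ZMod p)) ^ i := by
    rw [← Finset.sum_subset
      (Finset.subset_univ ((Finset.univ : Finset (ZMod p)ˣ).map ⟨((↑) : (ZMod p)ˣ → ZMod p), Units.val_injective⟩))]
    · rw [Finset.sum_map]; rfl
    · intro x _ hx
      have hx0 : x = 0 := by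
        by_contra h
        exact hx (Finset.mem_map.mpr ⟨Units.mk0 x h, Finset.mem_univ _, rfl⟩)
      simp [hx0, zero_pow hi]
  rw [h1]
  have h2 := FiniteField.sum_pow_units (ZMod p) i
  rw [ZMod.card] at h2
  simpa using h2

open Polynomial Finset in
private lemma sum_eval_zmod (p : ℕ) [Fact p.Prime] (hp : 3 < p) (f : Polynomial (ZMod p))
    (hdeg : f.natDegree < 2 * (p - 1)) :
    ∑ t : ZMod p, f.eval t = - f.coeff (p - 1) := by
  classical
  have key : ∀ i, i < 2 * (p - 1) → ∑ t : ZMod p, t ^ i = if i = p - 1 then -1 else 0 := by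
    intro i hi
    rcases eq_or_ne i 0 with rfl | hi0
    · rw [if_neg (by omega)]
      simp [Finset.card_univ, ZMod.card, ZMod.natCast_self]
    · rw [sum_pow_zmod p i hi0]
      by_cases hieq : i = p - 1
      · rw [if_pos hieq, if_pos (hieq ▸ dvd_refl _)]
      · rw [if_neg hieq, if_neg ?_]
        rintro ⟨k, rfl⟩
        have hk2 : k < 2 := by
          by_contra hk
          push_neg at hk
          have : (p - 1) * 2 ≤ (p - 1) * k := Nat.mul_le_mul_left _ hk
          omega
        interval_cases k <;> simp_all
  have heval : ∀ t : ZMod p,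
      f.eval t = ∑ i ∈ Finset.range (f.natDegree + 1), f.coeff i * t ^ i :=
    fun t => f.eval_eq_sum_range t
  calc ∑ t : ZMod p, f.eval t
      = ∑ t : ZMod p, ∑ i ∈ Finset.range (f.natDegree + 1), f.coeff i * t ^ i :=
        Finset.sum_congr rfl fun t _ => heval t
    _ = ∑ i ∈ Finset.range (f.natDegree + 1), ∑ t : ZMod p, f.coeff i * t ^ i :=
        Finset.sum_comm
    _ = ∑ i ∈ Finset.range (f.natDegree + 1), f.coeff i * (if i = p - 1 then -1 else 0) := by
        refine Finset.sum_congr rfl fun i hi => ?_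
        rw [← Finset.mul_sum, key i (by simp only [Finset.mem_range] at hi; omega)]
    _ = ∑ i ∈ Finset.range (f.natDegree + 1), (if i = p - 1 then - f.coeff i else 0) := by
        refine Finset.sum_congr rfl fun i _ => ?_
        split_ifs <;> ring
    _ = if p - 1 ∈ Finset.range (f.natDegree + 1) then - f.coeff (p - 1) else 0 :=
        Finset.sum_ite_eq' _ _ _
    _ = - f.coeff (p - 1) := by
        split_ifs with h
        · rfl
        · rw [Finset.mem_range, not_lt] at h
          rw [Polynomial.coeff_eq_zero_of_natDegree_lt (by omega), neg_zero]

open Polynomial in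
theorem elliptic_count_eq_neg_coeff (p : ℕ) [Fact p.Prime] (hp : 3 < p)
    (x : Fin 3 → ZMod p) (j : Fin 3) :
    ∑ ty ∈ Finset.univ.filter
        (fun ty : ZMod p × ZMod p =>
          ty.2 ^ 2 = ∏ s, (ty.1 + x s) ∧ ty.1 + x j ≠ 0),
      (ty.1 + x j)⁻¹ =
    - ((X + C (x j)) ^ ((p - 1) / 2 - 1) *
        ∏ s ∈ Finset.univ.erase j, (X + C (x s)) ^ ((p - 1) / 2)).coeff (p - 1) := by
  classical
  have hp' : p.Prime := Fact.out
  have hodd : p % 2 = 1 := Nat.odd_iff.mp (hp'.odd_of_ne_two (by omega))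
  set q := (p - 1) / 2 with hqdef
  have hq2 : 2 ≤ q := by omega
  set f : Polynomial (ZMod p) :=
    (X + C (x j)) ^ (q - 1) * ∏ s ∈ Finset.univ.erase j, (X + C (x s)) ^ q with hf
  -- key pointwise computation
  have key : ∀ t : ZMod p,
      (∑ y : ZMod p, if (y ^ 2 = ∏ s, (t + x s) ∧ t + x j ≠ 0) then (t + x j)⁻¹ else 0)
      = (t + x j) ^ (p - 2) + f.eval t := by
    intro t
    have hfeval : f.eval t
        = (t + x j) ^ (q - 1) * ∏ s ∈ Finset.univ.erase j, (t + x s) ^ q := by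
      simp [hf, eval_prod]
    by_cases h : t + x j = 0
    · simp only [h, ne_eq, not_true_eq_false, and_false, if_false, Finset.sum_const_zero]
      rw [hfeval, h]
      simp [zero_pow, show p - 2 ≠ 0 by omega, show q - 1 ≠ 0 by omega]
    · simp only [ne_eq, h, not_false_iff, and_true]
      rw [← Finset.sum_filter, Finset.sum_const, nsmul_eq_mul]
      have hchar : ringChar (ZMod p) ≠ 2 := by
        rw [ZMod.ringChar_zmod_n]; omega
      have hcard : (((Finset.univ.filter
            (fun y : ZMod p => y ^ 2 = ∏ s, (t + x s))).card : ℕ) : ZMod p)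
          = 1 + (∏ s, (t + x s)) ^ q := by
        have h1 := quadraticChar_card_sqrts hchar (∏ s, (t + x s))
        have h2 := quadraticChar_eq_pow_of_char_ne_two' hchar (∏ s, (t + x s))
        have h3 : ({y : ZMod p | y ^ 2 = ∏ s, (t + x s)}.toFinset) =
            Finset.univ.filter (fun y : ZMod p => y ^ 2 = ∏ s, (t + x s)) := by
          ext y; simp
        rw [h3] at h1
        have h4 := congrArg (fun n : ℤ => (n : ZMod p)) h1
        push_cast at h4
        rw [h4, h2, ZMod.card]
        have hq : p / 2 = q := by omega
        rw [hq]; ring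
      rw [hcard]
      have hprod : (∏ s, (t + x s))
          = (t + x j) * ∏ s ∈ Finset.univ.erase j, (t + x s) :=
        (Finset.mul_prod_erase _ _ (Finset.mem_univ j)).symm
      have hinv : (t + x j)⁻¹ = (t + x j) ^ (p - 2) := by
        have h1 : (t + x j) ^ (p - 2) * (t + x j) = 1 := by
          rw [← pow_succ]
          have hps : p - 2 + 1 = p - 1 := by omega
          rw [hps, ZMod.pow_card_sub_one_eq_one h]
        exact inv_eq_of_mul_eq_one_left h1
      have e1 : (t + x j) ^ q * (t + x j)⁻¹ = (t + x j) ^ (q - 1) := by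
        have hpow : (t + x j) ^ q = (t + x j) ^ (q - 1) * (t + x j) := by
          rw [← pow_succ]; congr 1; omega
        rw [hpow, mul_assoc, mul_inv_cancel₀ h, mul_one]
      rw [hprod, mul_pow, ← Finset.prod_pow, hfeval, add_mul, one_mul, mul_right_comm, e1, hinv]
  -- degree bound
  have hdeg : f.natDegree < 2 * (p - 1) := by
    have h1 : f.natDegree ≤ (q - 1) + 2 * q := by
      refine Polynomial.natDegree_mul_le.trans (add_le_add ?_ ?_)
      · exact Polynomial.natDegree_pow_le.trans
          (by simp [Polynomial.natDegree_X_add_C])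
      · refine (Polynomial.natDegree_prod_le _ _).trans ?_
        have hb : ∀ s ∈ Finset.univ.erase j, ((X + C (x s)) ^ q).natDegree ≤ q :=
          fun s _ => Polynomial.natDegree_pow_le.trans
            (by simp [Polynomial.natDegree_X_add_C])
        refine (Finset.sum_le_sum hb).trans ?_
        rw [Finset.sum_const, Finset.card_erase_of_mem (Finset.mem_univ j), smul_eq_mul]
        simp [mul_comm]
    omega
  rw [Finset.sum_filter, Fintype.sum_prod_type]
  calc ∑ t : ZMod p, ∑ y : ZMod p,
        (if (y ^ 2 = ∏ s, (t + x s) ∧ t + x j ≠ 0) then (t + x j)⁻¹ else 0)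
      = ∑ t : ZMod p, ((t + x j) ^ (p - 2) + f.eval t) :=
        Finset.sum_congr rfl fun t _ => key t
    _ = (∑ t : ZMod p, (t + x j) ^ (p - 2)) + ∑ t : ZMod p, f.eval t :=
        Finset.sum_add_distrib
    _ = 0 + (- f.coeff (p - 1)) := by
        congr 1
        · rw [show (∑ t : ZMod p, (t + x j) ^ (p - 2))
              = ∑ u : ZMod p, u ^ (p - 2) from
            Equiv.sum_comp (Equiv.addRight (x j)) (fun u => u ^ (p - 2))]
          exact FiniteField.sum_pow_lt_card_sub_one (ZMod p) (p - 2)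
            (by rw [ZMod.card]; omega)
        · exact sum_eval_zmod p hp f hdeg
    _ = - f.coeff (p - 1) := zero_add _
end
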